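/- Every element of D has exactly two preimages under the right projection π_R on 𝒞_1 ∪ 𝒞_2: exactly one preimage in 𝒞_1 and exactly one in 𝒞_2, and these two preimages are distinct; indeed their x0-coordinates differ by 2s, where s > 0 is the common s-coordinate of the two preimages. Thus π_R : 𝒞_1 ∪ 𝒞_2 → D is two-to-one. (Second part of the paper's main theorem on the toric section transform.) -/

import Mathlib

/-- The canonical relation `𝒞_j ⊆ ℝ⁴ × (ℝ² × ℝ²)` of the circle transform `T_j`
(`j ∈ {1,2}`), for scanning region `X = {2 − r_m < x2 < 1}`:
all pairs `((s, x0, (−1)^{j−1}σ(x1−x0), −σ((−1)^{j−1}s + x1 − x0)),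
((x1,x2), −σ((x1,x2) − c_j(s,x0))))` with `s > 0`, `σ ≠ 0` and
`(x1,x2) ∈ C_j(s,x0) ∩ X`, where `c_j(s,x0) = (x0 + (−1)^j s, 2)`. -/
def Crel (rm : ℝ) (j : ℕ) : Set ((ℝ × ℝ × ℝ × ℝ) × ((ℝ × ℝ) × (ℝ × ℝ))) :=
  {p | ∃ s x0 σ x1 x2 : ℝ, 0 < s ∧ σ ≠ 0 ∧
    (x1 - (x0 + (-1 : ℝ) ^ j * s)) ^ 2 + (x2 - 2) ^ 2 = s ^ 2 + 1 ∧
    2 - rm < x2 ∧ x2 < 1 ∧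
    p = ((s, x0, (-1 : ℝ) ^ (j - 1) * σ * (x1 - x0),
            -σ * ((-1 : ℝ) ^ (j - 1) * s + x1 - x0)),
         ((x1, x2), (-σ * (x1 - (x0 + (-1 : ℝ) ^ j * s)), -σ * (x2 - 2))))}

/-- The set `D = {((x1,x2),(ξ1,ξ2)) : 2 − r_m < x2 < 1, ξ2 ≠ 0}`. -/
def Dset (rm : ℝ) : Set ((ℝ × ℝ) × (ℝ × ℝ)) :=
  {v | 2 - rm < v.1.2 ∧ v.1.2 < 1 ∧ v.2.2 ≠ 0}

/-!
The right projection `((x1,x2),(ξ1,ξ2))` of a point of `𝒞_j` determines `σ = -ξ2/(x2-2)`,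
hence the center `c = x0 + (-1)^j s` of the circle through `(x1,x2)`, and the circle equation
`(x1-c)^2 + (x2-2)^2 = s^2+1` then determines `s > 0`; such an `s` exists because `x2 < 1`
forces `(x2-2)^2 > 1`. The preimages in `𝒞_1` and `𝒞_2` share `c` and `s` and have
`x0 = c + s` and `x0 = c - s` respectively.
-/

theorem Crel_injOn_snd (rm : ℝ) (j : ℕ) : Set.InjOn Prod.snd (Crel rm j) := by
  rintro _ ⟨s, x0, σ, x1, x2, hs, hσ, hcirc, -, hx2, rfl⟩
    _ ⟨s', x0', σ', x1', x2', hs', -, hcirc', -, -, rfl⟩ heq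
  simp only [Prod.mk.injEq] at heq
  obtain ⟨⟨rfl, rfl⟩, hξ1, hξ2⟩ := heq
  obtain rfl : σ = σ' := by
    have hx2' : x2 - 2 ≠ 0 := by linarith
    simpa [hx2'] using hξ2
  have hc : x0 + (-1 : ℝ) ^ j * s = x0' + (-1 : ℝ) ^ j * s' := by
    have := mul_left_cancel₀ (neg_ne_zero.mpr hσ) hξ1
    linarith
  obtain rfl : s = s' := by
    rw [hc] at hcirc
    nlinarith
  obtain rfl : x0 = x0' := by linarith
  rfl

theorem exists_center_of_mem_Dset {rm : ℝ} {v : (ℝ × ℝ) × (ℝ × ℝ)} (hv : v ∈ Dset rm) :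
    ∃ s c σ : ℝ, 0 < s ∧ σ ≠ 0 ∧ (v.1.1 - c) ^ 2 + (v.1.2 - 2) ^ 2 = s ^ 2 + 1 ∧
      v.2 = (-σ * (v.1.1 - c), -σ * (v.1.2 - 2)) := by
  obtain ⟨⟨x1, x2⟩, ξ1, ξ2⟩ := v
  obtain ⟨-, hx2, hξ2⟩ := hv
  dsimp only at hx2 hξ2 ⊢
  have hx2' : x2 - 2 ≠ 0 := by linarith
  set σ := -ξ2 / (x2 - 2)
  set c := x1 - ξ1 * (x2 - 2) / ξ2
  have hrad : 0 < (x1 - c) ^ 2 + (x2 - 2) ^ 2 - 1 := by nlinarith [sq_nonneg (x1 - c)]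
  refine ⟨√((x1 - c) ^ 2 + (x2 - 2) ^ 2 - 1), c, σ, Real.sqrt_pos.mpr hrad,
    div_ne_zero (neg_ne_zero.mpr hξ2) hx2', ?_, ?_⟩
  · rw [Real.sq_sqrt hrad.le]; ring
  · simp only [σ, c, Prod.mk.injEq]
    constructor
    · field_simp
      ring
    · field_simp

theorem exists_mem_Crel_of_center (rm : ℝ) (j : ℕ) {s c σ x1 x2 : ℝ} (hs : 0 < s) (hσ : σ ≠ 0)
    (hcirc : (x1 - c) ^ 2 + (x2 - 2) ^ 2 = s ^ 2 + 1) (hx2 : 2 - rm < x2) (hx2' : x2 < 1) :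
    ∃ p ∈ Crel rm j, p.1.1 = s ∧ p.1.2.1 = c - (-1 : ℝ) ^ j * s ∧
      p.2 = ((x1, x2), (-σ * (x1 - c), -σ * (x2 - 2))) :=
  ⟨_, ⟨s, c - (-1 : ℝ) ^ j * s, σ, x1, x2, hs, hσ, by rwa [sub_add_cancel], hx2, hx2', rfl⟩,
    rfl, rfl, by rw [sub_add_cancel]⟩

theorem stmt7_general (rm : ℝ)
    (v : (ℝ × ℝ) × (ℝ × ℝ)) (hv : v ∈ Dset rm) :
    ∃ p q : (ℝ × ℝ × ℝ × ℝ) × ((ℝ × ℝ) × (ℝ × ℝ)),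
      p ∈ Crel rm 1 ∧ q ∈ Crel rm 2 ∧ p.2 = v ∧ q.2 = v ∧
      (∀ p' ∈ Crel rm 1, p'.2 = v → p' = p) ∧
      (∀ q' ∈ Crel rm 2, q'.2 = v → q' = q) ∧
      p ≠ q ∧
      p.1.1 = q.1.1 ∧ 0 < p.1.1 ∧
      p.1.2.1 - q.1.2.1 = 2 * p.1.1 := by
  obtain ⟨s, c, σ, hs, hσ, hcirc, hξ⟩ := exists_center_of_mem_Dset hv
  have hv_eq : ((v.1.1, v.1.2), (-σ * (v.1.1 - c), -σ * (v.1.2 - 2))) = v := by rw [← hξ]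
  obtain ⟨p, hp, hps, hpx0, hpv⟩ := exists_mem_Crel_of_center rm 1 hs hσ hcirc hv.1 hv.2.1
  obtain ⟨q, hq, hqs, hqx0, hqv⟩ := exists_mem_Crel_of_center rm 2 hs hσ hcirc hv.1 hv.2.1
  rw [hv_eq] at hpv hqv
  have hx0 : p.1.2.1 - q.1.2.1 = 2 * s := by rw [hpx0, hqx0]; ring
  refine ⟨p, q, hp, hq, hpv, hqv,
    fun p' hp' h ↦ Crel_injOn_snd rm 1 hp' hp (h.trans hpv.symm),
    fun q' hq' h ↦ Crel_injOn_snd rm 2 hq' hq (h.trans hqv.symm),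
    fun hpq ↦ ?_, hps.trans hqs.symm, hps ▸ hs, hps ▸ hx0⟩
  rw [hpq, sub_self] at hx0
  linarith

/-- Every element of `D` has exactly two preimages under the right projection on
`𝒞_1 ∪ 𝒞_2`: exactly one in `𝒞_1` and exactly one in `𝒞_2`, and these are distinct;
their `x0`-coordinates differ by `2s`, where `s > 0` is their common `s`-coordinate.
Thus `π_R : 𝒞_1 ∪ 𝒞_2 → D` is two-to-one. -/
theorem stmt7 (rm : ℝ) (hrm : 1 < rm)
    (v : (ℝ × ℝ) × (ℝ × ℝ)) (hv : v ∈ Dset rm) :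
    ∃ p q : (ℝ × ℝ × ℝ × ℝ) × ((ℝ × ℝ) × (ℝ × ℝ)),
      p ∈ Crel rm 1 ∧ q ∈ Crel rm 2 ∧ p.2 = v ∧ q.2 = v ∧
      (∀ p' ∈ Crel rm 1, p'.2 = v → p' = p) ∧
      (∀ q' ∈ Crel rm 2, q'.2 = v → q' = q) ∧
      p ≠ q ∧
      p.1.1 = q.1.1 ∧ 0 < p.1.1 ∧
      p.1.2.1 - q.1.2.1 = 2 * p.1.1 :=
  stmt7_general rm v hv
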